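/- arXiv:2505.23591 — 7 statements merged into one kernel-verified Lean document; each statement's English description precedes it below -/
import Mathlib

section
/- For every real x > 0, sinh(x)/x < exp(x²/4). -/
/-!
Both sides of `sinh x < x * exp (x ^ 2 / 4)` are power series in `x` with only odd powers:
the coefficient of `x ^ (2n+1)` is `1 / (2n+1)!` on the left and `1 / (4 ^ n * n!)` on the right.
Since `(2n+1)! = (2n+1) * C(2n, n) * n! ^ 2` and `4 ^ n ≤ (2n+1) * C(2n, n)`, every coefficient on
the left is at most the one on the right, strictly so for `n = 1` (`1/6 < 1/4`).
-/

open scoped Nat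

lemma Nat.four_pow_mul_factorial_mul_factorial_le (n : ℕ) :
    4 ^ n * n ! * n ! ≤ (2 * n + 1)! := by
  have hchoose : (2 * n).choose n * n ! * n ! = (2 * n)! := by
    simpa [two_mul] using Nat.choose_mul_factorial_mul_factorial (n := 2 * n) (k := n) (by omega)
  calc 4 ^ n * n ! * n ! ≤ (2 * n + 1) * (2 * n).choose n * n ! * n ! := by
        gcongr; exact Nat.four_pow_le_two_mul_add_one_mul_central_binom n
    _ = (2 * n + 1)! := by rw [Nat.factorial_succ, ← hchoose]; ring

lemma Nat.four_pow_mul_factorial_le (n : ℕ) : 4 ^ n * n ! ≤ (2 * n + 1)! :=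
  (Nat.le_mul_of_pos_right _ n.factorial_pos).trans (four_pow_mul_factorial_mul_factorial_le n)

lemma Real.hasSum_mul_exp_sq_div_four (x : ℝ) :
    HasSum (fun n : ℕ => x ^ (2 * n + 1) / (4 ^ n * n ! : ℝ)) (x * Real.exp (x ^ 2 / 4)) := by
  rw [Real.exp_eq_exp_ℝ]
  refine ((NormedSpace.expSeries_div_hasSum_exp (x ^ 2 / 4)).mul_left x).congr_fun fun n => ?_
  rw [div_pow, ← pow_mul, pow_succ]
  field_simp

lemma Real.sinh_lt_mul_exp_sq_div_four {x : ℝ} (hx : 0 < x) :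
    Real.sinh x < x * Real.exp (x ^ 2 / 4) := by
  refine hasSum_lt (i := 1) (fun n => ?_) ?_ (Real.hasSum_sinh x) (hasSum_mul_exp_sq_div_four x)
  · gcongr
    exact_mod_cast Nat.four_pow_mul_factorial_le n
  · norm_num [Nat.factorial]
    gcongr
    norm_num

theorem stmt_2 (x : ℝ) (hx : 0 < x) :
    Real.sinh x / x < Real.exp (x ^ 2 / 4) := by
  rw [div_lt_iff₀' hx]
  exact Real.sinh_lt_mul_exp_sq_div_four hx
end

section
/- For every real x with 0 < x < π/2, sin(x)/x > exp(-x²/4). -/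
/-!
Bound `sin x` below by `x - x³/6` and `exp t` below by `1 + t + t²/2` at `t = x²/4`: the product of
the two bounds exceeds `x` by `x³ (16 - 2x² - x⁴) / 192`, which is positive as long as `x² ≤ 3`,
and `(π/2)² < 3`.
-/

open Real

theorem Real.lt_exp_sq_div_four_mul_sin {x : ℝ} (hx0 : 0 < x) (hx : x ^ 2 ≤ 3) :
    x < exp (x ^ 2 / 4) * sin x := by
  have hsin : x * (1 - x ^ 2 / 6) ≤ sin x := by
    linarith [sin_ge_sub_cube hx0.le]
  have hexp : 1 + x ^ 2 / 4 + (x ^ 2 / 4) ^ 2 / 2 ≤ exp (x ^ 2 / 4) :=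
    quadratic_le_exp_of_nonneg (by positivity)
  have hgap : 0 < x ^ 3 * (16 - 2 * x ^ 2 - x ^ 4) := by
    have : 0 < 16 - 2 * x ^ 2 - x ^ 4 := by nlinarith
    positivity
  calc x < (1 + x ^ 2 / 4 + (x ^ 2 / 4) ^ 2 / 2) * (x * (1 - x ^ 2 / 6)) := by nlinarith
    _ ≤ exp (x ^ 2 / 4) * sin x := by
      gcongr
      nlinarith

theorem Real.exp_neg_sq_div_four_lt_sin_div {x : ℝ} (hx0 : 0 < x) (hx : x ^ 2 ≤ 3) :
    exp (-x ^ 2 / 4) < sin x / x := by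
  rw [lt_div_iff₀ hx0, neg_div, exp_neg, inv_mul_lt_iff₀ (exp_pos _)]
  exact lt_exp_sq_div_four_mul_sin hx0 hx

theorem stmt_4 (x : ℝ) (hx0 : 0 < x) (hx : x < Real.pi / 2) :
    Real.sin x / x > Real.exp (-x ^ 2 / 4) := by
  have hx2 : x ^ 2 ≤ 3 := by nlinarith [pi_lt_d2]
  exact exp_neg_sq_div_four_lt_sin_div hx0 hx2
end

section
/- The function h(x) = (x² − 2)·sin(x) + 4x·cos(x) is strictly positive for all x in the open interval (0, π/2). -/
theorem stmt_5 (x : ℝ) (hx0 : 0 < x) (hx : x < Real.pi / 2) :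
    0 < (x ^ 2 - 2) * Real.sin x + 4 * x * Real.cos x := by
  have hcos : 0 < Real.cos x := Real.cos_pos_of_mem_Ioo ⟨by linarith, hx⟩
  rcases lt_or_ge (x ^ 2) 2 with h2 | h2
  · have hsin : Real.sin x < x := Real.sin_lt hx0
    have h1 : (x ^ 2 - 2) * x ≤ (x ^ 2 - 2) * Real.sin x := by
      apply mul_le_mul_of_nonpos_left hsin.le (by linarith)
    have h3 : 1 - x ^ 2 / 2 < Real.cos x := Real.one_sub_sq_div_two_lt_cos hx0.ne'
    have h4 : 4 * x * (1 - x ^ 2 / 2) < 4 * x * Real.cos x := by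
      apply mul_lt_mul_of_pos_left h3 (by linarith)
    nlinarith
  · have hsin : 0 < Real.sin x := Real.sin_pos_of_pos_of_lt_pi hx0 (by linarith [Real.pi_pos])
    nlinarith
end

section
/- The function x ↦ sin(x)·exp(x²/4)/x is strictly increasing on the interval (0, π/2). -/
/-!
Writing `f x = sin x * exp (x ^ 2 / 4) / x`, the quotient rule gives
`f' x = exp (x ^ 2 / 4) * N x / x ^ 2` with `N x = x cos x - sin x + x ^ 2 sin x / 2`.
Since `N 0 = 0` and `N' x = x ^ 2 cos x / 2 > 0` on `(0, π/2)`, the numerator `N` is positive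
there, hence so is `f'`.
-/

open Real Set

noncomputable def sinExpDerivNumerator (x : ℝ) : ℝ :=
  x * cos x - sin x + x ^ 2 * sin x / 2

lemma hasDerivAt_sinExpDerivNumerator (x : ℝ) :
    HasDerivAt sinExpDerivNumerator (x ^ 2 * cos x / 2) x := by
  have h := (((hasDerivAt_id x).mul (hasDerivAt_cos x)).sub (hasDerivAt_sin x)).add
    (((hasDerivAt_pow 2 x).mul (hasDerivAt_sin x)).div_const 2)
  exact h.congr_deriv (by simp only [id]; ring)

lemma strictMonoOn_sinExpDerivNumerator : StrictMonoOn sinExpDerivNumerator (Icc 0 (π / 2)) := by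
  refine strictMonoOn_of_hasDerivWithinAt_pos (convex_Icc _ _)
    (fun x _ => (hasDerivAt_sinExpDerivNumerator x).continuousAt.continuousWithinAt)
    (fun x _ => (hasDerivAt_sinExpDerivNumerator x).hasDerivWithinAt) fun x hx => ?_
  rw [interior_Icc] at hx
  have hcos : 0 < cos x := cos_pos_of_mem_Ioo ⟨by linarith [hx.1, pi_pos], hx.2⟩
  have hx0 : 0 < x := hx.1
  positivity

lemma sinExpDerivNumerator_pos {x : ℝ} (hx : x ∈ Ioc 0 (π / 2)) : 0 < sinExpDerivNumerator x := by
  have h := strictMonoOn_sinExpDerivNumerator ⟨le_rfl, by positivity⟩ (Ioc_subset_Icc_self hx) hx.1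
  simpa [sinExpDerivNumerator] using h

lemma hasDerivAt_sin_mul_exp_div {x : ℝ} (hx : x ≠ 0) :
    HasDerivAt (fun x : ℝ => sin x * exp (x ^ 2 / 4) / x)
      (exp (x ^ 2 / 4) * sinExpDerivNumerator x / x ^ 2) x := by
  have hnum : HasDerivAt (fun x : ℝ => sin x * exp (x ^ 2 / 4))
      (cos x * exp (x ^ 2 / 4) + sin x * (exp (x ^ 2 / 4) * (2 * x ^ 1 / 4))) x :=
    (hasDerivAt_sin x).mul ((hasDerivAt_pow 2 x).div_const 4).exp
  exact (hnum.div (hasDerivAt_id x) hx).congr_deriv (by simp only [sinExpDerivNumerator, id]; ring)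

theorem stmt_7 :
    StrictMonoOn (fun x : ℝ => Real.sin x * Real.exp (x ^ 2 / 4) / x)
      (Set.Ioo 0 (Real.pi / 2)) := by
  have hderiv : ∀ x ∈ Ioo 0 (π / 2), HasDerivAt (fun x : ℝ => sin x * exp (x ^ 2 / 4) / x)
      (exp (x ^ 2 / 4) * sinExpDerivNumerator x / x ^ 2) x :=
    fun x hx => hasDerivAt_sin_mul_exp_div hx.1.ne'
  refine strictMonoOn_of_hasDerivWithinAt_pos (convex_Ioo _ _)
    (f' := fun x => exp (x ^ 2 / 4) * sinExpDerivNumerator x / x ^ 2)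
    (fun x hx => (hderiv x hx).continuousAt.continuousWithinAt) (fun x hx => ?_) fun x hx => ?_
  all_goals rw [interior_Ioo] at hx
  · exact (hderiv x hx).hasDerivWithinAt
  · have hN := sinExpDerivNumerator_pos (Ioo_subset_Ioc_self hx)
    have hx0 : 0 < x := hx.1
    positivity
end

section
/- For every real a > 0, the function x ↦ x/tanh(a·x) is monotone increasing on (0, ∞). -/
/-!
Writing `x / tanh x = x cosh x / sinh x`, the derivative is `(sinh x cosh x - x) / sinh² x`,
positive on `(0, ∞)` because `sinh x cosh x = sinh (2x) / 2 > x`. The case of general `a > 0`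
is the rescaling `x / tanh (a x) = a⁻¹ · (a x / tanh (a x))`.
-/

open Real Set

lemma Real.lt_sinh_mul_cosh {x : ℝ} (hx : 0 < x) : x < sinh x * cosh x := by
  have h := self_lt_sinh_iff.mpr (mul_pos two_pos hx)
  rw [sinh_two_mul] at h
  linarith

lemma Real.div_tanh_eq (x : ℝ) : x / tanh x = x * cosh x / sinh x := by
  rw [tanh_eq_sinh_div_cosh, div_div_eq_mul_div]

lemma Real.hasDerivAt_mul_cosh_div_sinh {x : ℝ} (hx : sinh x ≠ 0) :
    HasDerivAt (fun y => y * cosh y / sinh y) ((sinh x * cosh x - x) / sinh x ^ 2) x := by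
  refine (((hasDerivAt_id' x).mul (hasDerivAt_cosh x)).div (hasDerivAt_sinh x) hx).congr_deriv ?_
  simp only [Pi.mul_apply]
  congr 1
  linear_combination (-x) * cosh_sq x

lemma Real.strictMonoOn_div_tanh : StrictMonoOn (fun x => x / tanh x) (Ioi 0) := by
  simp only [div_tanh_eq]
  apply strictMonoOn_of_deriv_pos (convex_Ioi 0)
  · exact fun x hx => (hasDerivAt_mul_cosh_div_sinh (sinh_pos_iff.mpr hx).ne').continuousAt
      |>.continuousWithinAt
  · intro x hx
    rw [interior_Ioi] at hx
    have hs : 0 < sinh x := sinh_pos_iff.mpr hx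
    rw [(hasDerivAt_mul_cosh_div_sinh hs.ne').deriv]
    exact div_pos (sub_pos.mpr (lt_sinh_mul_cosh hx)) (by positivity)

theorem stmt_8 (a : ℝ) (ha : 0 < a) :
    MonotoneOn (fun x : ℝ => x / Real.tanh (a * x)) (Set.Ioi 0) := by
  intro x hx y hy hxy
  have hrescale : ∀ z : ℝ, z / tanh (a * z) = a⁻¹ * (a * z / tanh (a * z)) := fun z => by
    field_simp
  simp only [hrescale x, hrescale y]
  gcongr ?_ * ?_
  exact strictMonoOn_div_tanh.monotoneOn (mul_pos ha hx) (mul_pos ha hy)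
    (mul_le_mul_of_nonneg_left hxy ha.le)
end

section
/- Fix a with 0 < a < π/2. The function g(x) = arccos(cos(a)² + sin(a)²·cos(x)) is strictly concave on (0, π), and its second derivative equals −4·sin(a)⁴·cos(a)²·sin(x/2)⁴ / (1 − (cos(a)² + sin(a)²·cos(x))²)^(3/2) there. -/
/-!
Write `g x = arccos (c + s cos x)` with `c = cos² a`, `s = sin² a`, so `c + s = 1`, and
`u = c + s cos x`. Then `g' = s sin x / √(1 - u²)`, and in the quotient rule for `g''` the numerator
`s cos x (1 - u²) - s² sin² x u` collapses, thanks to `c + s = 1`, to `-s² c (1 - cos x)²`,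
i.e. to `-4 s² c sin⁴ (x / 2)`. This is negative on `(0, π)`, which gives strict concavity.
-/

open Real Set Filter Topology

lemma one_sub_sq_pos_of_mem_Ioo {u : ℝ} (hu : u ∈ Ioo (-1) 1) : 0 < 1 - u ^ 2 :=
  sub_pos.2 ((sq_lt_one_iff_abs_lt_one u).2 (abs_lt.2 hu))

lemma cos_mem_Ioo_of_mem_Ioo {x : ℝ} (hx : x ∈ Ioo 0 π) : cos x ∈ Ioo (-1) 1 :=
  ⟨by simpa using cos_lt_cos_of_nonneg_of_le_pi hx.1.le le_rfl hx.2,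
    by simpa using cos_lt_cos_of_nonneg_of_le_pi le_rfl hx.2.le hx.1⟩

lemma one_sub_cos_eq_two_mul_sin_half_sq (x : ℝ) : 1 - cos x = 2 * sin (x / 2) ^ 2 := by
  have := cos_two_mul_eq_one_sub (x / 2)
  rw [mul_div_cancel₀ x two_ne_zero] at this
  linarith

section ArccosAddMulCos

variable {c s x : ℝ}

lemma add_mul_cos_mem_Ioo (hs : 0 < s) (hc : 0 ≤ c) (hcs : c + s = 1) (hx : x ∈ Ioo 0 π) :
    c + s * cos x ∈ Ioo (-1) 1 := by
  have hcos := cos_mem_Ioo_of_mem_Ioo hx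
  constructor <;> nlinarith [hcos.1, hcos.2]

lemma hasDerivAt_arccos_add_mul_cos (hx : c + s * cos x ∈ Ioo (-1) 1) :
    HasDerivAt (fun y => arccos (c + s * cos y))
      (s * sin x / √(1 - (c + s * cos x) ^ 2)) x := by
  have hu : HasDerivAt (fun y => c + s * cos y) (s * -sin x) x :=
    ((hasDerivAt_cos x).const_mul s).const_add c
  refine ((hasDerivAt_arccos hx.1.ne' hx.2.ne).comp x hu).congr_deriv ?_
  ring

lemma deriv_arccos_add_mul_cos_eventuallyEq (hx : c + s * cos x ∈ Ioo (-1) 1) :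
    deriv (fun y => arccos (c + s * cos y)) =ᶠ[𝓝 x]
      fun y => s * sin y / √(1 - (c + s * cos y) ^ 2) := by
  have hcont : Continuous fun y => c + s * cos y := by fun_prop
  filter_upwards [hcont.continuousAt.preimage_mem_nhds (Ioo_mem_nhds hx.1 hx.2)] with y hy
  exact (hasDerivAt_arccos_add_mul_cos hy).deriv

lemma hasDerivAt_deriv_arccos_add_mul_cos (hcs : c + s = 1) (hx : c + s * cos x ∈ Ioo (-1) 1) :
    HasDerivAt (deriv fun y => arccos (c + s * cos y))
      (-(s ^ 2 * c * (1 - cos x) ^ 2) / √(1 - (c + s * cos x) ^ 2) ^ 3) x := by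
  have hw := one_sub_sq_pos_of_mem_Ioo hx
  have hu : HasDerivAt (fun y => 1 - (c + s * cos y) ^ 2)
      (2 * (c + s * cos x) * (s * sin x)) x := by
    refine ((((hasDerivAt_cos x).const_mul s).const_add c).pow 2).const_sub 1 |>.congr_deriv ?_
    ring
  have hquot := ((hasDerivAt_sin x).const_mul s).div (hu.sqrt hw.ne') (sqrt_pos.2 hw).ne'
  refine (hquot.congr_of_eventuallyEq (deriv_arccos_add_mul_cos_eventuallyEq hx)).congr_deriv ?_
  have numerator : s * cos x * (1 - (c + s * cos x) ^ 2) - s ^ 2 * sin x ^ 2 * (c + s * cos x)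
      = -(s ^ 2 * c * (1 - cos x) ^ 2) := by
    obtain rfl : c = 1 - s := by linarith
    linear_combination (-(s ^ 2) * (1 - s + s * cos x)) * sin_sq_add_cos_sq x
  rw [← numerator]
  generalize hq : √(1 - (c + s * cos x) ^ 2) = q at *
  have hq2 : q ^ 2 = 1 - (c + s * cos x) ^ 2 := by rw [← hq, sq_sqrt hw.le]
  have hq0 : q ≠ 0 := by rw [← hq]; exact (sqrt_pos.2 hw).ne'
  rw [← hq2]
  field_simp

lemma strictConcaveOn_arccos_add_mul_cos (hs : 0 < s) (hc : 0 < c) (hcs : c + s = 1) :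
    StrictConcaveOn ℝ (Ioo 0 π) fun y => arccos (c + s * cos y) := by
  refine strictConcaveOn_of_deriv2_neg' (convex_Ioo 0 π) (by fun_prop) fun x hx => ?_
  have hu := add_mul_cos_mem_Ioo hs hc.le hcs hx
  have hw := one_sub_sq_pos_of_mem_Ioo hu
  have hcos := (cos_mem_Ioo_of_mem_Ioo hx).2
  have hnum : 0 < s ^ 2 * c * (1 - cos x) ^ 2 := by
    have : 0 < 1 - cos x := by linarith
    positivity
  rw [Function.iterate_succ_apply, Function.iterate_one,
    (hasDerivAt_deriv_arccos_add_mul_cos hcs hu).deriv]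
  exact div_neg_of_neg_of_pos (neg_neg_of_pos hnum) (by positivity)

end ArccosAddMulCos

theorem stmt_13 (a : ℝ) (ha0 : 0 < a) (ha : a < Real.pi / 2) :
    StrictConcaveOn ℝ (Set.Ioo 0 Real.pi)
      (fun x : ℝ => Real.arccos (Real.cos a ^ 2 + Real.sin a ^ 2 * Real.cos x)) ∧
    ∀ x ∈ Set.Ioo 0 Real.pi,
      deriv (deriv (fun x : ℝ => Real.arccos (Real.cos a ^ 2 + Real.sin a ^ 2 * Real.cos x))) x
        = -(4 * Real.sin a ^ 4 * Real.cos a ^ 2 * Real.sin (x / 2) ^ 4) /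
            ((1 - (Real.cos a ^ 2 + Real.sin a ^ 2 * Real.cos x) ^ 2) ^ ((3 : ℝ) / 2)) := by
  have hs : 0 < sin a ^ 2 := pow_pos (sin_pos_of_pos_of_lt_pi ha0 (by linarith [pi_pos])) 2
  have hc : 0 < cos a ^ 2 := pow_pos (cos_pos_of_mem_Ioo ⟨by linarith, ha⟩) 2
  have hcs : cos a ^ 2 + sin a ^ 2 = 1 := cos_sq_add_sin_sq a
  refine ⟨strictConcaveOn_arccos_add_mul_cos hs hc hcs, fun x hx => ?_⟩
  have hu := add_mul_cos_mem_Ioo hs hc.le hcs hx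
  rw [(hasDerivAt_deriv_arccos_add_mul_cos hcs hu).deriv,
    rpow_div_two_eq_sqrt _ (one_sub_sq_pos_of_mem_Ioo hu).le, show (3 : ℝ) = (3 : ℕ) by norm_num,
    rpow_natCast, one_sub_cos_eq_two_mul_sin_half_sq]
  ring
end

section
/- Fix a with 0 < a < π/2. The function f(x) = arccos(cos(a)² + sin(a)²·cos(x))/x is strictly decreasing on (0, π), and in particular f(x) ≥ f(π) = 2a/π for all x ∈ (0, π]. -/
/-!
Since `cos x = 1 - 2 sin² (x/2)`, the numerator is `g x = 2 arcsin (k sin (x/2))` with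
`k = sin a ∈ (0, 1)`. Its derivative `k cos (x/2) / √(1 - k² + k² cos² (x/2))` is strictly
decreasing on `(0, π)`, so `g` is strictly concave on `[0, π]`; as `g 0 = 0`, the slope `g x / x`
of its chord from the origin is strictly decreasing, and `g π / π = 2a / π`.
-/

open Real Set

theorem Real.arccos_one_sub_two_mul_sq {t : ℝ} (ht₀ : 0 ≤ t) (ht₁ : t ≤ 1) :
    arccos (1 - 2 * t ^ 2) = 2 * arcsin t := by
  have hcos : cos (2 * arcsin t) = 1 - 2 * t ^ 2 := by
    rw [cos_two_mul_eq_one_sub, sin_arcsin (by linarith) ht₁]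
  rw [← hcos, arccos_cos (by linarith [arcsin_nonneg.2 ht₀])
    (by linarith [arcsin_le_pi_div_two t])]

theorem Real.arccos_cos_sq_add_sin_sq_mul_cos {a x : ℝ} (ha : 0 ≤ sin a)
    (hx : x ∈ Icc 0 (2 * π)) :
    arccos (cos a ^ 2 + sin a ^ 2 * cos x) = 2 * arcsin (sin a * sin (x / 2)) := by
  have hsin : 0 ≤ sin (x / 2) :=
    sin_nonneg_of_nonneg_of_le_pi (by linarith [hx.1]) (by linarith [hx.2])
  have hprod : sin a * sin (x / 2) ≤ 1 := by nlinarith [sin_le_one a, sin_le_one (x / 2)]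
  have hcos : cos x = 1 - 2 * sin (x / 2) ^ 2 := by rw [← cos_two_mul_eq_one_sub]; ring_nf
  rw [← arccos_one_sub_two_mul_sq (mul_nonneg ha hsin) hprod, hcos, cos_sq']
  ring_nf

theorem strictMonoOn_div_sqrt_add_mul_sq {A B : ℝ} (hA : 0 < A) (hB : 0 ≤ B) :
    StrictMonoOn (fun c => c / √(A + B * c ^ 2)) (Ici 0) := by
  intro c (hc₀ : 0 ≤ c) d (hd₀ : 0 ≤ d) hcd
  have hc : 0 < √(A + B * c ^ 2) := sqrt_pos.2 (by positivity)
  have hd : 0 < √(A + B * d ^ 2) := sqrt_pos.2 (by positivity)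
  simp only
  rw [div_lt_div_iff₀ hc hd]
  refine lt_of_pow_lt_pow_left₀ 2 (by positivity) ?_
  rw [mul_pow, mul_pow, sq_sqrt (by positivity), sq_sqrt (by positivity)]
  -- the `B c² d²` terms cancel, leaving `A c² < A d²`
  nlinarith [mul_lt_mul_of_pos_left (pow_lt_pow_left₀ hcd hc₀ two_ne_zero) hA]

theorem hasDerivAt_two_mul_arcsin_mul_sin_half {k : ℝ} (hk : |k| < 1) (x : ℝ) :
    HasDerivAt (fun y => 2 * arcsin (k * sin (y / 2)))
      (k * (cos (x / 2) / √(1 - k ^ 2 + k ^ 2 * cos (x / 2) ^ 2))) x := by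
  have hlt : |k * sin (x / 2)| < 1 := by
    rw [abs_mul]
    exact (mul_le_of_le_one_right (abs_nonneg k) (abs_sin_le_one _)).trans_lt hk
  have hinner : HasDerivAt (fun y => k * sin (y / 2)) (k * (cos (x / 2) * (1 / 2))) x :=
    ((hasDerivAt_id' x).div_const 2).sin.const_mul k
  refine (((hasDerivAt_arcsin (abs_lt.1 hlt).1.ne' (abs_lt.1 hlt).2.ne).comp x hinner).const_mul
    2).congr_deriv ?_
  rw [show 1 - (k * sin (x / 2)) ^ 2 = 1 - k ^ 2 + k ^ 2 * cos (x / 2) ^ 2 by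
    rw [mul_pow, sin_sq]; ring]
  ring

theorem strictConcaveOn_two_mul_arcsin_mul_sin_half {k : ℝ} (hk₀ : 0 < k) (hk₁ : k < 1) :
    StrictConcaveOn ℝ (Icc 0 π) (fun y => 2 * arcsin (k * sin (y / 2))) := by
  have hderiv := hasDerivAt_two_mul_arcsin_mul_sin_half (abs_lt.2 ⟨by linarith, hk₁⟩)
  refine StrictAntiOn.strictConcaveOn_of_deriv (convex_Icc 0 π)
    (fun y _ => (hderiv y).continuousAt.continuousWithinAt) ?_
  rw [interior_Icc, funext fun y => (hderiv y).deriv]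
  intro x hx y hy hxy
  have hcos : cos (y / 2) < cos (x / 2) :=
    cos_lt_cos_of_nonneg_of_le_pi (by linarith [hx.1]) (by linarith [hy.2, pi_pos])
      (by linarith)
  have hcos₀ : 0 ≤ cos (y / 2) :=
    cos_nonneg_of_mem_Icc ⟨by linarith [hy.1, pi_pos], by linarith [hy.2]⟩
  exact mul_lt_mul_of_pos_left (strictMonoOn_div_sqrt_add_mul_sq (by nlinarith) (sq_nonneg k)
    hcos₀ (hcos₀.trans hcos.le) hcos) hk₀

theorem StrictConcaveOn.strictAntiOn_div_self {s : Set ℝ} {f : ℝ → ℝ}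
    (hf : StrictConcaveOn ℝ s f) (h₀ : 0 ∈ s) (hf₀ : f 0 = 0) :
    StrictAntiOn (fun x => f x / x) (s ∩ Ioi 0) := by
  intro x hx y hy hxy
  simpa [hf₀] using hf.secant_strict_mono h₀ hx.1 hy.1 hx.2.ne' hy.2.ne' hxy

theorem stmt_14 (a : ℝ) (ha0 : 0 < a) (ha : a < Real.pi / 2) :
    StrictAntiOn (fun x : ℝ => Real.arccos (Real.cos a ^ 2 + Real.sin a ^ 2 * Real.cos x) / x)
      (Set.Ioo 0 Real.pi) ∧
    Real.arccos (Real.cos a ^ 2 + Real.sin a ^ 2 * Real.cos Real.pi) / Real.pi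
      = 2 * a / Real.pi ∧
    ∀ x ∈ Set.Ioc 0 Real.pi,
      Real.arccos (Real.cos a ^ 2 + Real.sin a ^ 2 * Real.cos x) / x ≥ 2 * a / Real.pi := by
  have hsin₀ : 0 < sin a := sin_pos_of_pos_of_lt_pi ha0 (by linarith [pi_pos])
  have hsin₁ : sin a < 1 := by
    simpa using sin_lt_sin_of_lt_of_le_pi_div_two (by linarith) le_rfl ha
  have hanti : StrictAntiOn (fun x => arccos (cos a ^ 2 + sin a ^ 2 * cos x) / x)
      (Icc 0 π ∩ Ioi 0) :=
    ((strictConcaveOn_two_mul_arcsin_mul_sin_half hsin₀ hsin₁).strictAntiOn_div_self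
      ⟨le_rfl, pi_pos.le⟩ (by simp)).congr fun x hx => by
        simp only [arccos_cos_sq_add_sin_sq_mul_cos hsin₀.le
          ⟨hx.1.1, by linarith [hx.1.2, pi_pos]⟩]
  have hπ : arccos (cos a ^ 2 + sin a ^ 2 * cos π) / π = 2 * a / π := by
    rw [arccos_cos_sq_add_sin_sq_mul_cos hsin₀.le ⟨pi_pos.le, by linarith [pi_pos]⟩,
      sin_pi_div_two, mul_one, arcsin_sin (by linarith) (by linarith)]
  refine ⟨hanti.mono fun x hx => ⟨Ioo_subset_Icc_self hx, hx.1⟩, hπ, fun x hx => ?_⟩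
  rw [← hπ]
  exact hanti.antitoneOn ⟨Ioc_subset_Icc_self hx, hx.1⟩ ⟨⟨pi_pos.le, le_rfl⟩, pi_pos⟩ hx.2
end
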